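/- Let X_1, …, X_m be i.i.d. real random variables, let x ∈ ℝ, and set p = P(X_1 ≥ x). If p ≤ 1/2, then P( med(X_1, …, X_m) ≥ x ) ≤ exp( (m/2) · ln( 4p(1 − p) ) ). -/

import Mathlib

/-! If the median of the `X i` is at least `x`, then at least half of the `X i` are at least `x`.
The indicators of the events `{x ≤ X i}` are i.i.d. Bernoulli(`p`), so the Chernoff bound with
parameter `t = log ((1 - p) / p)` gives
`P(m / 2 ≤ #{i | x ≤ X i}) ≤ exp (-t m / 2) (1 - p + p exp t) ^ m = (4 p (1 - p)) ^ (m / 2)`.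
For `p = 0` a union bound shows that the probability vanishes. -/

open MeasureTheory ProbabilityTheory Real
open scoped ENNReal

/-- The sample median of `m` real values: the middle order statistic if `m` is odd,
the average of the two middle order statistics if `m` is even. -/
noncomputable def sampleMedian {m : ℕ} (x : Fin m → ℝ) : ℝ :=
  let l := List.insertionSort (· ≤ ·) (List.ofFn x)
  if m % 2 = 1 then l.getD (m / 2) 0
  else (l.getD (m / 2 - 1) 0 + l.getD (m / 2) 0) / 2

open Finset

theorem List.SortedLE.length_sub_le_countP {α : Type*} [Preorder α] [DecidableLE α] {l : List α}
    (hl : l.SortedLE) {k : ℕ} (hk : k < l.length) {x : α} (hx : x ≤ l[k]) :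
    l.length - k ≤ l.countP (fun a => decide (x ≤ a)) := by
  have hdrop : ∀ a ∈ l.drop k, x ≤ a := by
    intro a ha
    obtain ⟨i, hi, rfl⟩ := List.mem_iff_getElem.mp ha
    rw [List.getElem_drop]
    exact hx.trans (hl.getElem_le_getElem_of_le (Nat.le_add_right k i))
  calc l.length - k = (l.drop k).length := (List.length_drop ..).symm
    _ = (l.drop k).countP (fun a => decide (x ≤ a)) :=
      (List.countP_eq_length.mpr (by simpa using hdrop)).symm
    _ ≤ l.countP (fun a => decide (x ≤ a)) := (List.drop_sublist k l).countP_le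

theorem List.countP_ofFn {α : Type*} {m : ℕ} (v : Fin m → α) (P : α → Prop) [DecidablePred P] :
    (List.ofFn v).countP (fun a => decide (P a)) = #{i | P (v i)} := by
  rw [← Multiset.coe_countP, ← Fin.univ_val_map, Multiset.countP_map]
  rfl

theorem sampleMedian_le_getElem {m : ℕ} (v : Fin m → ℝ) (hm : 0 < m) :
    sampleMedian v ≤ (List.insertionSort (· ≤ ·) (List.ofFn v))[m / 2]'(by simp; omega) := by
  set l := List.insertionSort (· ≤ ·) (List.ofFn v)
  have hlen : m / 2 < l.length := by simp [l]; omega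
  unfold sampleMedian
  dsimp only
  split_ifs
  · rw [List.getD_eq_getElem l 0 hlen]
  · rw [List.getD_eq_getElem l 0 hlen, List.getD_eq_getElem l 0 (by omega)]
    have : l[m / 2 - 1] ≤ l[m / 2] :=
      List.sortedLE_insertionSort.getElem_le_getElem_of_le (Nat.sub_le _ _)
    linarith

theorem le_two_mul_card_of_le_sampleMedian {m : ℕ} (v : Fin m → ℝ) {x : ℝ}
    (hx : x ≤ sampleMedian v) : m ≤ 2 * #{i | x ≤ v i} := by
  rcases Nat.eq_zero_or_pos m with rfl | hm
  · simp
  have hperm :=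
    (List.perm_insertionSort (· ≤ ·) (List.ofFn v)).countP_eq (fun a => decide (x ≤ a))
  have := List.sortedLE_insertionSort.length_sub_le_countP (by simp; omega)
    (hx.trans (sampleMedian_le_getElem v hm))
  simp only [List.length_insertionSort, List.length_ofFn, hperm, List.countP_ofFn] at this
  omega

theorem ProbabilityTheory.iIndepFun.iIndepSet_preimage {Ω ι : Type*} [MeasurableSpace Ω]
    {μ : Measure Ω} {β : ι → Type*} {mβ : ∀ i, MeasurableSpace (β i)} {f : ∀ i, Ω → β i}
    (hf : iIndepFun f μ) (hmeas : ∀ i, Measurable (f i)) {s : ∀ i, Set (β i)}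
    (hs : ∀ i, MeasurableSet (s i)) : iIndepSet (fun i => f i ⁻¹' s i) μ :=
  (iIndepSet_iff_meas_biInter fun i => hmeas i (hs i)).2 fun S =>
    hf.measure_inter_preimage_eq_mul S fun i _ => hs i

section Chernoff

variable {Ω ι : Type*} [MeasurableSpace Ω] {μ : Measure Ω}

theorem ProbabilityTheory.mgf_indicator_one [IsProbabilityMeasure μ] {A : Set Ω}
    (hA : MeasurableSet A) (t : ℝ) :
    mgf (A.indicator fun _ => (1 : ℝ)) μ t = 1 + (exp t - 1) * μ.real A := by
  have : (fun ω => exp (t * A.indicator (fun _ => (1 : ℝ)) ω))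
      = fun ω => A.indicator (fun _ => exp t - 1) ω + 1 := by
    ext ω
    by_cases h : ω ∈ A <;> simp [h]
  rw [mgf, this, integral_add ((integrable_const _).indicator hA) (integrable_const 1),
    integral_indicator_const _ hA]
  simp only [smul_eq_mul, integral_const, probReal_univ]
  ring

variable [Fintype ι] {A : ι → Set Ω}

theorem measureReal_sum_indicator_ge_le (hA : ∀ i, MeasurableSet (A i)) (hind : iIndepSet A μ)
    {p : ℝ} (hp : ∀ i, μ.real (A i) = p) {t : ℝ} (ht : 0 ≤ t) (a : ℝ) :
    μ.real {ω | a ≤ ∑ i, (A i).indicator (fun _ => (1 : ℝ)) ω}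
      ≤ exp (-t * a) * (1 + (exp t - 1) * p) ^ Fintype.card ι := by
  have := hind.isProbabilityMeasure
  set Y : ι → Ω → ℝ := fun i => (A i).indicator fun _ => 1
  have hY : ∀ i, Measurable (Y i) := fun i => measurable_const.indicator (hA i)
  have hSle : ∀ ω, (∑ i, Y i) ω ≤ Fintype.card ι := fun ω => by
    simpa [Finset.sum_apply] using
      Finset.sum_le_card_nsmul univ (Y · ω) 1 fun i _ => Set.indicator_le_self' (by simp) ω
  have hint : Integrable (fun ω => exp (t * (∑ i, Y i) ω)) μ :=
    integrable_exp_mul_of_le t _ ht (by fun_prop) (ae_of_all _ hSle)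
  calc μ.real {ω | a ≤ ∑ i, Y i ω} = μ.real {ω | a ≤ (∑ i, Y i) ω} := by
        simp only [Finset.sum_apply]
    _ ≤ exp (-t * a) * mgf (∑ i, Y i) μ t := measure_ge_le_exp_mul_mgf a ht hint
    _ = exp (-t * a) * (1 + (exp t - 1) * p) ^ Fintype.card ι := by
      rw [hind.iIndepFun_indicator.mgf_sum hY]
      simp only [mgf_indicator_one (hA _), hp, Finset.prod_const, Finset.card_univ]

theorem measureReal_sum_indicator_ge_half_card_le (hA : ∀ i, MeasurableSet (A i))
    (hind : iIndepSet A μ) {p : ℝ} (hp : ∀ i, μ.real (A i) = p) (hp0 : 0 < p) (hp1 : p ≤ 1 / 2) :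
    μ.real {ω | (Fintype.card ι : ℝ) / 2 ≤ ∑ i, (A i).indicator (fun _ => (1 : ℝ)) ω}
      ≤ exp (Fintype.card ι / 2 * log (4 * p * (1 - p))) := by
  have hq : 0 < 1 - p := by linarith
  have ht : 0 ≤ log ((1 - p) / p) := log_nonneg (by rw [le_div_iff₀ hp0]; linarith)
  -- `t = log ((1 - p) / p)` minimises `exp (-t n / 2) (1 + (exp t - 1) p) ^ n`.
  refine (measureReal_sum_indicator_ge_le hA hind hp ht _).trans_eq ?_
  rw [exp_log (div_pos hq hp0), show 1 + ((1 - p) / p - 1) * p = 2 * (1 - p) by field_simp; ring,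
    ← exp_log (by positivity : 0 < 2 * (1 - p)), ← exp_nat_mul, ← exp_add,
    log_div hq.ne' hp0.ne', log_mul two_ne_zero hq.ne', log_mul (by positivity) hq.ne',
    log_mul (by norm_num) hp0.ne', show (4 : ℝ) = 2 ^ 2 by norm_num, log_pow]
  ring_nf

theorem measure_card_le_two_mul_card_mem_le [Nonempty ι] [∀ i, DecidablePred (· ∈ A i)]
    (hA : ∀ i, MeasurableSet (A i)) (hind : iIndepSet A μ) {p : ℝ}
    (hp : ∀ i, μ (A i) = ENNReal.ofReal p) (hp1 : p ≤ 1 / 2) :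
    μ {ω | Fintype.card ι ≤ 2 * #{i | ω ∈ A i}}
      ≤ ENNReal.ofReal (exp (Fintype.card ι / 2 * log (4 * p * (1 - p)))) := by
  have := hind.isProbabilityMeasure
  rcases le_or_gt p 0 with hp0 | hp0
  · have hsub : {ω | Fintype.card ι ≤ 2 * #{i | ω ∈ A i}} ⊆ ⋃ i, A i := fun ω hω => by
      have := Fintype.card_pos (α := ι)
      obtain ⟨i, hi⟩ := card_pos.1 (by simp only [Set.mem_ofPred_eq] at hω; omega :
        0 < #{i | ω ∈ A i})
      exact Set.mem_iUnion.2 ⟨i, (mem_filter.1 hi).2⟩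
    have hnull : μ (⋃ i, A i) = 0 :=
      measure_iUnion_null fun i => by rw [hp, ENNReal.ofReal_eq_zero.2 hp0]
    exact (measure_mono_null hsub hnull).trans_le zero_le
  have hsub : {ω | Fintype.card ι ≤ 2 * #{i | ω ∈ A i}}
      ⊆ {ω | (Fintype.card ι : ℝ) / 2 ≤ ∑ i, (A i).indicator (fun _ => (1 : ℝ)) ω} :=
    fun ω hω => by
      have : (Fintype.card ι : ℝ) ≤ 2 * #{i | ω ∈ A i} := by exact_mod_cast hω
      simp only [Set.mem_ofPred_eq, Set.indicator_apply, sum_boole]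
      linarith
  refine (measure_mono hsub).trans ?_
  rw [← ofReal_measureReal]
  gcongr
  exact measureReal_sum_indicator_ge_half_card_le hA hind
    (fun i => by rw [measureReal_def, hp, ENNReal.toReal_ofReal hp0.le]) hp0 hp1

end Chernoff

/-- Let `X 0, …, X (m-1)` be i.i.d. real random variables (`m ≥ 1`), `x ∈ ℝ`,
and `p = P(X 0 ≥ x)`.  If `p ≤ 1/2`, then
`P(med(X 0, …, X (m-1)) ≥ x) ≤ exp((m/2)·ln(4p(1−p)))`. -/
theorem stmt8
    {Ω : Type*} [MeasureSpace Ω] [IsProbabilityMeasure (ℙ : Measure Ω)]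
    {m : ℕ} (hm : 1 ≤ m)
    (X : Fin m → Ω → ℝ) (hXmeas : ∀ i, Measurable (X i))
    (hindep : iIndepFun X ℙ)
    (hident : ∀ i : Fin m, Measure.map (X i) ℙ = Measure.map (X ⟨0, hm⟩) ℙ)
    (x : ℝ) (p : ℝ)
    (hp : ℙ {ω | x ≤ X ⟨0, hm⟩ ω} = ENNReal.ofReal p)
    (hphalf : p ≤ 1 / 2) :
    ℙ {ω | x ≤ sampleMedian (fun i => X i ω)}
      ≤ ENNReal.ofReal (Real.exp ((m : ℝ) / 2 * Real.log (4 * p * (1 - p)))) := by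
  set A : Fin m → Set Ω := fun i => {ω | x ≤ X i ω}
  have hA : ∀ i, MeasurableSet (A i) := fun i => hXmeas i measurableSet_Ici
  have hPA : ∀ i, ℙ (A i) = ENNReal.ofReal p := fun i => by
    change ℙ (X i ⁻¹' Set.Ici x) = _
    rw [← Measure.map_apply (hXmeas i) measurableSet_Ici, hident i,
      Measure.map_apply (hXmeas _) measurableSet_Ici, ← hp]
    rfl
  have : Nonempty (Fin m) := ⟨⟨0, hm⟩⟩
  have hind : iIndepSet A ℙ := hindep.iIndepSet_preimage hXmeas fun _ => measurableSet_Ici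
  calc ℙ {ω | x ≤ sampleMedian fun i => X i ω} ≤ ℙ {ω | m ≤ 2 * #{i | ω ∈ A i}} :=
        measure_mono fun ω => le_two_mul_card_of_le_sampleMedian _
    _ ≤ _ := by simpa using measure_card_le_two_mul_card_mem_le hA hind hPA hphalf
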